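/- arXiv:2311.04841 — 6 statements merged into one kernel-verified Lean document; each statement's English description precedes it below -/
import Mathlib

section
/- Under the assumptions of the previous statement (p^{cn}, p0, p1 ∈ (0,1) with p0 < p1, 0 < d < 1 < u, γ > 0, θ ∈ [0,1], and the map F as defined there), the equation y = F(y) admits a unique solution y* ∈ ℝ. -/
/-! Writing `x = k e^t` with `k = p^{cn}/(1-p^{cn})`, `a = p0/p1`, `m = (1-p0)/(1-p1)`, the map is
`F y = c (A + φ(γθy))` with `φ t = log (x + a) - log (x + m)` and `c = (p1 - p0)/γ`. The derivative
of `φ` is the difference `x/(x+a) - x/(x+m)` of two numbers in `[0, 1]`, so `φ` is 1-Lipschitz, and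
`F` is a contraction with constant `|c γ θ| = |(p1 - p0) θ| < 1`. -/

open Real

lemma log_one_add_sub_div_add {x a m : ℝ} (ha : 0 < x + a) (hm : 0 < x + m) :
    log (1 + (a - m) / (x + m)) = log (x + a) - log (x + m) := by
  rw [← log_div ha.ne' hm.ne']
  congr 1
  field_simp
  ring

lemma hasDerivAt_log_mul_exp_add {k a : ℝ} (hk : 0 < k) (ha : 0 < a) (t : ℝ) :
    HasDerivAt (fun t => log (k * exp t + a)) (k * exp t / (k * exp t + a)) t := by
  have hpos : 0 < k * exp t + a := by positivity
  simpa using (((hasDerivAt_exp t).const_mul k).add_const a).log hpos.ne'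

lemma lipschitzWith_one_log_mul_exp_add_sub {k a m : ℝ} (hk : 0 < k) (ha : 0 < a) (hm : 0 < m) :
    LipschitzWith 1 (fun t => log (k * exp t + a) - log (k * exp t + m)) := by
  have hderiv (t : ℝ) : HasDerivAt (fun t => log (k * exp t + a) - log (k * exp t + m))
      (k * exp t / (k * exp t + a) - k * exp t / (k * exp t + m)) t :=
    (hasDerivAt_log_mul_exp_add hk ha t).sub (hasDerivAt_log_mul_exp_add hk hm t)
  refine lipschitzWith_of_nnnorm_deriv_le (fun t => (hderiv t).differentiableAt) fun t => ?_
  have hfrac {b : ℝ} (hb : 0 < b) : 0 ≤ k * exp t / (k * exp t + b) ∧ k * exp t / (k * exp t + b) ≤ 1 :=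
    ⟨by positivity, (div_le_one (by positivity)).2 (by linarith)⟩
  rw [(hderiv t).deriv, ← NNReal.coe_le_coe, coe_nnnorm, NNReal.coe_one, Real.norm_eq_abs]
  exact abs_sub_le_of_nonneg_of_le (hfrac ha).1 (hfrac ha).2 (hfrac hm).1 (hfrac hm).2

lemma existsUnique_eq_mul_add_comp_mul {φ : ℝ → ℝ} (hφ : LipschitzWith 1 φ) {c w : ℝ}
    (hcw : |c * w| < 1) (A : ℝ) : ∃! y, y = c * (A + φ (w * y)) := by
  have hcontr : ContractingWith ‖c * w‖₊ (fun y => c * (A + φ (w * y))) := by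
    refine ⟨by simpa [← NNReal.coe_lt_coe] using hcw, LipschitzWith.of_dist_le_mul fun x y => ?_⟩
    calc dist (c * (A + φ (w * x))) (c * (A + φ (w * y)))
        = |c| * dist (φ (w * x)) (φ (w * y)) := by
          rw [dist_eq, dist_eq, ← mul_sub, add_sub_add_left_eq_sub, abs_mul]
      _ ≤ |c| * dist (w * x) (w * y) := by
          gcongr
          simpa using hφ.dist_le_mul (w * x) (w * y)
      _ = ‖c * w‖₊ * dist x y := by
          rw [coe_nnnorm, Real.norm_eq_abs, dist_eq, dist_eq, ← mul_sub, abs_mul, abs_mul, mul_assoc]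
  exact ⟨hcontr.fixedPoint _, hcontr.fixedPoint_isFixedPt.symm,
    fun z hz => hcontr.fixedPoint_unique hz.symm⟩

theorem stmt5_general (pcn p0 p1 u d γ θ : ℝ)
    (hcn0 : 0 < pcn) (hcn1 : pcn < 1)
    (hp00 : 0 < p0) (hp01 : p0 < 1) (hp10 : 0 < p1) (hp11 : p1 < 1)
    (hu : 1 < u) (hd1 : d < 1)
    (hγ : 0 < γ) (hθ0 : 0 ≤ θ) (hθ1 : θ ≤ 1) :
    let q : ℝ := (1 - d) / (u - d)
    let Δ1 : ℝ := p1 * (u - 1) + (1 - p1) * (d - 1)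
    let Δ0 : ℝ := p0 * (u - 1) + (1 - p0) * (d - 1)
    let F : ℝ → ℝ := fun y =>
      ((Δ1 - Δ0) / (γ * (u - d))) *
        (Real.log ((1 - q) * p1 / (q * (1 - p1))) +
          Real.log (1 + (p0 / p1 - (1 - p0) / (1 - p1)) /
            ((pcn / (1 - pcn)) * Real.exp (γ * θ * y) + (1 - p0) / (1 - p1))))
    ∃! y : ℝ, y = F y := by
  intro q Δ1 Δ0 F
  have hk : 0 < pcn / (1 - pcn) := div_pos hcn0 (by linarith)
  have ha : 0 < p0 / p1 := div_pos hp00 hp10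
  have hm : 0 < (1 - p0) / (1 - p1) := div_pos (by linarith) (by linarith)
  have hc : (Δ1 - Δ0) / (γ * (u - d)) = (p1 - p0) / γ := by
    rw [div_eq_div_iff (mul_pos hγ (by linarith)).ne' hγ.ne']
    ring
  have hF : F = fun y => (p1 - p0) / γ * (log ((1 - q) * p1 / (q * (1 - p1))) +
      (fun t => log (pcn / (1 - pcn) * exp t + p0 / p1) -
        log (pcn / (1 - pcn) * exp t + (1 - p0) / (1 - p1))) (γ * θ * y)) := by
    funext y
    simp only [F, hc]
    rw [log_one_add_sub_div_add (by positivity) (by positivity)]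
  have hcw : |(p1 - p0) / γ * (γ * θ)| < 1 := by
    rw [show (p1 - p0) / γ * (γ * θ) = (p1 - p0) * θ by field_simp]
    calc |(p1 - p0) * θ| = |p1 - p0| * θ := by rw [abs_mul, abs_of_nonneg hθ0]
      _ ≤ |p1 - p0| := mul_le_of_le_one_right (abs_nonneg _) hθ1
      _ < 1 := abs_sub_lt_of_nonneg_of_lt hp10.le hp11 hp00.le hp01
  rw [hF]
  exact existsUnique_eq_mul_add_comp_mul (lipschitzWith_one_log_mul_exp_add_sub hk ha hm) hcw _

theorem stmt5 (pcn p0 p1 u d γ θ : ℝ)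
    (hcn0 : 0 < pcn) (hcn1 : pcn < 1)
    (hp00 : 0 < p0) (hp01 : p0 < 1) (hp10 : 0 < p1) (hp11 : p1 < 1)
    (hpp : p0 < p1) (hu : 1 < u) (hd1 : d < 1) (hd0 : 0 < d)
    (hγ : 0 < γ) (hθ0 : 0 ≤ θ) (hθ1 : θ ≤ 1) :
    let q : ℝ := (1 - d) / (u - d)
    let Δ1 : ℝ := p1 * (u - 1) + (1 - p1) * (d - 1)
    let Δ0 : ℝ := p0 * (u - 1) + (1 - p0) * (d - 1)
    let F : ℝ → ℝ := fun y =>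
      ((Δ1 - Δ0) / (γ * (u - d))) *
        (Real.log ((1 - q) * p1 / (q * (1 - p1))) +
          Real.log (1 + (p0 / p1 - (1 - p0) / (1 - p1)) /
            ((pcn / (1 - pcn)) * Real.exp (γ * θ * y) + (1 - p0) / (1 - p1))))
    ∃! y : ℝ, y = F y :=
  stmt5_general pcn p0 p1 u d γ θ hcn0 hcn1 hp00 hp01 hp10 hp11 hu hd1 hγ hθ0 hθ1
end

section
/- Let p^{cn}, p0, p1 ∈ (0,1) with p0 < p1, 0 < d < 1 < u, γ > 0, θ ∈ [0,1], q = (1-d)/(u-d), and let p = p^{cn}·p1 + (1-p^{cn})·p0. Assume the expected excess return is positive: p(u-1)+(1-p)(d-1) > 0. Then F(0) > 0, where F is the mean field fixed point map, and consequently the unique fixed point y* of F satisfies y* > 0. -/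
/-!
With `A = (1-q) pcn p1`, `B = (1-q)(1-pcn) p0`, `C = q pcn (1-p1)`, `D = q (1-pcn)(1-p0)`, the map is
`F y = (p1 - p0)/γ · log ((A e^{γθy} + B) / (C e^{γθy} + D))`. At `y = 0` the argument of the
log is `(1-q) p / (q (1-p))`, which exceeds `1` exactly when the expected excess return is positive.
For `y ≤ 0` the log-ratio loses at most `γθ|y|` between `0` and `y`, so
`F 0 - F y ≤ (p1 - p0) θ |y| ≤ |y|`; a fixed point `y ≤ 0` would then force `F 0 ≤ 0`.
-/

open Real

lemma mul_mul_add_le_mul_add_mul {a b c d e : ℝ} (ha : 0 ≤ a) (hb : 0 ≤ b) (hc : 0 ≤ c)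
    (hd : 0 ≤ d) (he : 0 ≤ e) (he1 : e ≤ 1) :
    e * ((a + b) * (c * e + d)) ≤ (a * e + b) * (c + d) := by
  have hdiff : (a * e + b) * (c + d) - e * ((a + b) * (c * e + d))
      = (1 - e) * (a * c * e + b * c * (1 + e) + b * d) := by ring
  rw [← sub_nonneg, hdiff]
  exact mul_nonneg (sub_nonneg.mpr he1) (by positivity)

/- The slope of `t ↦ log ((a eᵗ + b) / (c eᵗ + d))` is `a eᵗ / (a eᵗ + b) - c eᵗ / (c eᵗ + d)`,
which lies in `(-1, 1)`. -/
lemma log_ratio_sub_log_ratio_exp_le {a b c d t : ℝ} (ha : 0 ≤ a) (hb : 0 < b) (hc : 0 ≤ c)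
    (hd : 0 < d) (ht : t ≤ 0) :
    log ((a + b) / (c + d)) - log ((a * exp t + b) / (c * exp t + d)) ≤ -t := by
  have hexp : exp t ≤ 1 := exp_le_one_iff.mpr ht
  have hNt : 0 < a * exp t + b := by positivity
  have hDt : 0 < c * exp t + d := by positivity
  rw [← log_div (by positivity) (by positivity), ← log_exp (-t)]
  refine log_le_log (by positivity) ?_
  rw [exp_neg]
  field_simp
  have := mul_mul_add_le_mul_add_mul ha hb.le hc hd.le (exp_pos t).le hexp
  linarith

lemma pos_of_isFixedPt_of_sub_le {f : ℝ → ℝ} {L y : ℝ} (hL : L ≤ 1) (hf0 : 0 < f 0)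
    (hf : ∀ z ≤ 0, f 0 - f z ≤ L * -z) (hy : Function.IsFixedPt f y) : 0 < y := by
  by_contra! hy0
  have := hf y hy0
  rw [hy.eq] at this
  nlinarith

lemma riskNeutral_pos {u d : ℝ} (hd1 : d < 1) (hu : 1 < u) : 0 < (1 - d) / (u - d) :=
  div_pos (by linarith) (by linarith)

lemma one_sub_riskNeutral_pos {u d : ℝ} (hd1 : d < 1) (hu : 1 < u) :
    0 < 1 - (1 - d) / (u - d) := by
  rw [sub_pos, div_lt_one (by linarith)]
  linarith

lemma riskNeutral_odds_lt {p u d : ℝ} (hdu : d < u)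
    (hexcess : 0 < p * (u - 1) + (1 - p) * (d - 1)) :
    (1 - d) / (u - d) * (1 - p) < (1 - (1 - d) / (u - d)) * p := by
  have hud : u - d ≠ 0 := by linarith
  have : (1 - (1 - d) / (u - d)) * p - (1 - d) / (u - d) * (1 - p)
      = (p * (u - 1) + (1 - p) * (d - 1)) / (u - d) := by
    field_simp; ring
  rw [← sub_pos, this]
  exact div_pos hexcess (by linarith)

theorem stmt6_general (pcn p0 p1 u d γ θ : ℝ)
    (hcn0 : 0 < pcn) (hcn1 : pcn < 1)
    (hp00 : 0 < p0) (hp01 : p0 < 1) (hp10 : 0 < p1) (hp11 : p1 < 1)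
    (hpp : p0 < p1) (hu : 1 < u) (hd1 : d < 1)
    (hγ : 0 < γ) (hθ0 : 0 ≤ θ) (hθ1 : θ ≤ 1)
    (hexcess : (pcn * p1 + (1 - pcn) * p0) * (u - 1)
        + (1 - (pcn * p1 + (1 - pcn) * p0)) * (d - 1) > 0) :
    let q : ℝ := (1 - d) / (u - d)
    let Δ1 : ℝ := p1 * (u - 1) + (1 - p1) * (d - 1)
    let Δ0 : ℝ := p0 * (u - 1) + (1 - p0) * (d - 1)
    let F : ℝ → ℝ := fun y =>
      ((Δ1 - Δ0) / (γ * (u - d))) *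
        Real.log ((1 - q) * (pcn * Real.exp (γ * θ * y) * p1 + (1 - pcn) * p0) /
          (q * (pcn * Real.exp (γ * θ * y) * (1 - p1) + (1 - pcn) * (1 - p0))))
    0 < F 0 ∧ ∀ y : ℝ, y = F y → 0 < y := by
  intro q Δ1 Δ0 F
  have hq : 0 < q := riskNeutral_pos hd1 hu
  have hq' : 0 < 1 - q := one_sub_riskNeutral_pos hd1 hu
  have hpcn' : 0 < 1 - pcn := by linarith
  set A := (1 - q) * pcn * p1
  set B := (1 - q) * (1 - pcn) * p0
  set C := q * pcn * (1 - p1)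
  set D := q * (1 - pcn) * (1 - p0)
  have hp0' : 0 < 1 - p0 := by linarith
  have hp1' : 0 < 1 - p1 := by linarith
  have hslope : 0 < (p1 - p0) / γ := div_pos (by linarith) hγ
  have hF (y : ℝ) :
      F y = (p1 - p0) / γ * log ((A * exp (γ * θ * y) + B) / (C * exp (γ * θ * y) + D)) := by
    have hcoef : (Δ1 - Δ0) / (γ * (u - d)) = (p1 - p0) / γ := by
      have : u - d ≠ 0 := by linarith
      field_simp; ring
    simp only [F, hcoef]
    congr 2; ring
  have hF0 : 0 < F 0 := by
    rw [hF, mul_zero, exp_zero, mul_one, mul_one]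
    refine mul_pos hslope (log_pos ?_)
    rw [one_lt_div (by positivity)]
    linear_combination riskNeutral_odds_lt (by linarith) hexcess
  refine ⟨hF0, fun y hy => pos_of_isFixedPt_of_sub_le (L := (p1 - p0) * θ) (by nlinarith) hF0
    (fun z hz => ?_) hy.symm⟩
  have ht : γ * θ * z ≤ 0 := mul_nonpos_of_nonneg_of_nonpos (by positivity) hz
  rw [hF, hF, mul_zero, exp_zero, mul_one, mul_one, ← mul_sub]
  calc _ ≤ (p1 - p0) / γ * -(γ * θ * z) :=
        mul_le_mul_of_nonneg_left (log_ratio_sub_log_ratio_exp_le (by positivity) (by positivity)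
          (by positivity) (by positivity) ht) hslope.le
    _ = (p1 - p0) * θ * -z := by field_simp

theorem stmt6 (pcn p0 p1 u d γ θ : ℝ)
    (hcn0 : 0 < pcn) (hcn1 : pcn < 1)
    (hp00 : 0 < p0) (hp01 : p0 < 1) (hp10 : 0 < p1) (hp11 : p1 < 1)
    (hpp : p0 < p1) (hu : 1 < u) (hd1 : d < 1) (hd0 : 0 < d)
    (hγ : 0 < γ) (hθ0 : 0 ≤ θ) (hθ1 : θ ≤ 1)
    (hexcess : (pcn * p1 + (1 - pcn) * p0) * (u - 1)
        + (1 - (pcn * p1 + (1 - pcn) * p0)) * (d - 1) > 0) :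
    let q : ℝ := (1 - d) / (u - d)
    let Δ1 : ℝ := p1 * (u - 1) + (1 - p1) * (d - 1)
    let Δ0 : ℝ := p0 * (u - 1) + (1 - p0) * (d - 1)
    let F : ℝ → ℝ := fun y =>
      ((Δ1 - Δ0) / (γ * (u - d))) *
        Real.log ((1 - q) * (pcn * Real.exp (γ * θ * y) * p1 + (1 - pcn) * p0) /
          (q * (pcn * Real.exp (γ * θ * y) * (1 - p1) + (1 - pcn) * (1 - p0))))
    0 < F 0 ∧ ∀ y : ℝ, y = F y → 0 < y :=
  stmt6_general pcn p0 p1 u d γ θ hcn0 hcn1 hp00 hp01 hp10 hp11 hpp hu hd1 hγ hθ0 hθ1 hexcess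
end

section
/- Let p^{cn}, p0, p1 ∈ (0,1) with p0 < p1, and let q ∈ (0,1), θ ∈ [0,1], N ∈ ℕ with N ≥ 1. Define f(y) = ((1-q)/q) · (p1·p^{cn}·G(y)^{N-1} + p0·(1-p^{cn})) / ((1-p1)·p^{cn}·G(y)^{N-1} + (1-p0)·(1-p^{cn})) for y > 0, where G(y) = (p1·y^{θ/(N-θ)} + (1-p1)) / (p0·y^{θ/(N-θ)} + (1-p0)). Then the equation f(y) = y admits a unique solution y* > 0. -/
theorem mob_key {a b a' b' c t1 t2 y1 y2 : ℝ} (ha : 0 < a) (hb : 0 < b)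
    (ha' : 0 < a') (hb' : 0 < b') (hc : 0 < c) (ht1 : 0 < t1) (ht2 : 0 < t2)
    (hy12 : y1 < y2) (hty : t2 * y1 ≤ t1 * y2) (htt : t1 * y1 ≤ t2 * y2) :
    c * (a * t2 + b) * y1 * (a' * t1 + b') < c * (a * t1 + b) * y2 * (a' * t2 + b') := by
  nlinarith [mul_pos hc (mul_pos (mul_pos ha ha') (mul_pos (mul_pos ht1 ht2) (sub_pos.2 hy12))),
    mul_nonneg (mul_nonneg hc.le (mul_pos ha hb').le) (sub_nonneg.2 hty),
    mul_nonneg (mul_nonneg hc.le (mul_pos ha' hb).le) (sub_nonneg.2 htt),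
    mul_pos (mul_pos hc (mul_pos hb hb')) (sub_pos.2 hy12)]

set_option maxHeartbeats 1000000 in

theorem stmt7 (pcn p0 p1 q θ : ℝ) (N : ℕ)
    (hcn0 : 0 < pcn) (hcn1 : pcn < 1)
    (hp00 : 0 < p0) (hp01 : p0 < 1) (hp10 : 0 < p1) (hp11 : p1 < 1)
    (hpp : p0 < p1) (hq0 : 0 < q) (hq1 : q < 1)
    (hθ0 : 0 ≤ θ) (hθ1 : θ ≤ 1) (hN : 1 ≤ N) :
    let G : ℝ → ℝ := fun y =>
      (p1 * y ^ (θ / ((N : ℝ) - θ)) + (1 - p1)) /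
      (p0 * y ^ (θ / ((N : ℝ) - θ)) + (1 - p0))
    let f : ℝ → ℝ := fun y =>
      ((1 - q) / q) * (p1 * pcn * G y ^ (N - 1) + p0 * (1 - pcn)) /
        ((1 - p1) * pcn * G y ^ (N - 1) + (1 - p0) * (1 - pcn))
    ∃! y : ℝ, 0 < y ∧ f y = y := by
  intro G f
  have hN1 : (1:ℝ) ≤ (N:ℝ) := by exact_mod_cast hN
  set α : ℝ := θ / ((N : ℝ) - θ) with hαdef
  have hα0 : 0 ≤ α := div_nonneg hθ0 (by linarith)
  have hkcast : ((N - 1 : ℕ) : ℝ) = (N:ℝ) - 1 := by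
    rw [Nat.cast_sub hN]; norm_num
  have hαk : α * ((N - 1 : ℕ) : ℝ) ≤ 1 := by
    rw [hkcast]
    rcases eq_or_lt_of_le (show (0:ℝ) ≤ (N:ℝ) - θ by linarith) with h | h
    · rw [hαdef, ← h, div_zero, zero_mul]; norm_num
    · rw [hαdef, div_mul_eq_mul_div, div_le_one h]
      nlinarith
  have hq1' : 0 < 1 - q := by linarith
  have hc : 0 < (1 - q) / q := div_pos hq1' hq0
  have hpcn' : 0 < 1 - pcn := by linarith
  have hp1' : 0 < 1 - p1 := by linarith
  have hp0' : 0 < 1 - p0 := by linarith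
  have hA : 0 < p1 * pcn := mul_pos hp10 hcn0
  have hB : 0 < p0 * (1 - pcn) := mul_pos hp00 hpcn'
  have hA' : 0 < (1 - p1) * pcn := mul_pos hp1' hcn0
  have hB' : 0 < (1 - p0) * (1 - pcn) := mul_pos hp0' hpcn'
  have hD : (1 - p1) * pcn * (p0 * (1 - pcn)) < p1 * pcn * ((1 - p0) * (1 - pcn)) := by
    nlinarith [mul_pos (mul_pos hcn0 hpcn') (sub_pos.mpr hpp)]
  have hGdef : ∀ y : ℝ, G y = (p1 * y ^ α + (1 - p1)) / (p0 * y ^ α + (1 - p0)) :=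
    fun y => rfl
  have hfdef : ∀ y : ℝ, f y = ((1 - q) / q) * (p1 * pcn * G y ^ (N - 1) + p0 * (1 - pcn)) /
      ((1 - p1) * pcn * G y ^ (N - 1) + (1 - p0) * (1 - pcn)) := fun y => rfl
  have hxpos : ∀ y : ℝ, 0 < y → 0 < y ^ α := fun y hy => Real.rpow_pos_of_pos hy α
  have hdenG : ∀ y : ℝ, 0 < y → 0 < p0 * y ^ α + (1 - p0) := by
    intro y hy; have := hxpos y hy; nlinarith
  have hnumG : ∀ y : ℝ, 0 < y → 0 < p1 * y ^ α + (1 - p1) := by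
    intro y hy; have := hxpos y hy; nlinarith
  have hG : ∀ y : ℝ, 0 < y → 0 < G y := by
    intro y hy; rw [hGdef]; exact div_pos (hnumG y hy) (hdenG y hy)
  have hGk : ∀ y : ℝ, 0 < y → 0 < G y ^ (N - 1) := fun y hy => pow_pos (hG y hy) _
  have hfden : ∀ y : ℝ, 0 < y →
      0 < (1 - p1) * pcn * G y ^ (N - 1) + (1 - p0) * (1 - pcn) := by
    intro y hy; have := hGk y hy; nlinarith
  -- bounds
  set L := (1 - q) / q * (p0 * (1 - pcn)) / ((1 - p0) * (1 - pcn)) with hLdef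
  set U := (1 - q) / q * (p1 * pcn) / ((1 - p1) * pcn) with hUdef
  have hL0 : 0 < L := div_pos (mul_pos hc hB) hB'
  have hLU : L < U := by
    rw [hLdef, hUdef, div_lt_div_iff₀ hB' hA']
    nlinarith [mul_pos hc (sub_pos.mpr hD)]
  have hU0 : 0 < U := hL0.trans hLU
  have hboundL : ∀ y : ℝ, 0 < y → L < f y := by
    intro y hy
    have ht := hGk y hy
    have hd := hfden y hy
    rw [hLdef, hfdef, div_lt_div_iff₀ hB' hd]
    nlinarith [mul_pos (mul_pos hc ht) (sub_pos.mpr hD)]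
  have hboundU : ∀ y : ℝ, 0 < y → f y < U := by
    intro y hy
    have ht := hGk y hy
    have hd := hfden y hy
    rw [hUdef, hfdef, div_lt_div_iff₀ hd hA']
    nlinarith [mul_pos (mul_pos hc ht) (sub_pos.mpr hD)]
  -- continuity on [L, U]
  have hmemL : ∀ y ∈ Set.Icc L U, 0 < y := fun y hy => hL0.trans_le hy.1
  have hxc : ContinuousOn (fun y : ℝ => y ^ α) (Set.Icc L U) :=
    continuousOn_id.rpow_const (fun y _ => Or.inr hα0)
  have hGc : ContinuousOn G (Set.Icc L U) := by
    show ContinuousOn (fun y : ℝ =>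
      (p1 * y ^ α + (1 - p1)) / (p0 * y ^ α + (1 - p0))) (Set.Icc L U)
    apply ContinuousOn.div
    · exact (continuousOn_const.mul hxc).add continuousOn_const
    · exact (continuousOn_const.mul hxc).add continuousOn_const
    · intro y hy; exact ne_of_gt (hdenG y (hmemL y hy))
  have hcont : ContinuousOn f (Set.Icc L U) := by
    show ContinuousOn (fun y : ℝ =>
      ((1 - q) / q) * (p1 * pcn * G y ^ (N - 1) + p0 * (1 - pcn)) /
        ((1 - p1) * pcn * G y ^ (N - 1) + (1 - p0) * (1 - pcn))) (Set.Icc L U)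
    apply ContinuousOn.div
    · exact continuousOn_const.mul
        (((continuousOn_const.mul (hGc.pow _)).add continuousOn_const))
    · exact (continuousOn_const.mul (hGc.pow _)).add continuousOn_const
    · intro y hy; exact ne_of_gt (hfden y (hmemL y hy))
  -- existence via IVT
  have hFc : ContinuousOn (fun y => f y - y) (Set.Icc L U) := hcont.sub continuousOn_id
  have h0mem : (0:ℝ) ∈ Set.Icc (f U - U) (f L - L) := by
    constructor
    · have := hboundU U hU0; linarith
    · have := hboundL L hL0; linarith
  obtain ⟨y, hyIcc, hFy⟩ := intermediate_value_Icc' (le_of_lt hLU) hFc h0mem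
  have hy0 : 0 < y := hmemL y hyIcc
  have hyfix : f y = y := sub_eq_zero.1 hFy
  -- key strict ratio inequality
  have key : ∀ y1 y2 : ℝ, 0 < y1 → y1 < y2 → f y2 * y1 < f y1 * y2 := by
    intro y1 y2 hy1 hy12
    have hy2 : 0 < y2 := hy1.trans hy12
    have hx1 : 0 < y1 ^ α := hxpos _ hy1
    have hx2 : 0 < y2 ^ α := hxpos _ hy2
    have hx12 : y1 ^ α ≤ y2 ^ α := Real.rpow_le_rpow hy1.le hy12.le hα0
    -- G monotone
    have hGmono : G y1 ≤ G y2 := by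
      rw [hGdef, hGdef, div_le_div_iff₀ (hdenG y1 hy1) (hdenG y2 hy2)]
      nlinarith [mul_nonneg (sub_nonneg.2 hx12) (le_of_lt (sub_pos.2 hpp))]
    -- ratio of G bounded by ratio of x
    have hGratio : G y2 * y1 ^ α ≤ G y1 * y2 ^ α := by
      rw [hGdef, hGdef, div_mul_eq_mul_div, div_mul_eq_mul_div,
        div_le_div_iff₀ (hdenG y2 hy2) (hdenG y1 hy1)]
      nlinarith [mul_nonneg (sub_nonneg.2 hx12)
          (le_of_lt (mul_pos (mul_pos hp00 hp10) (mul_pos hx1 hx2))),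
        mul_nonneg (sub_nonneg.2 hx12) (le_of_lt (mul_pos (mul_pos hp1' hp00) hx1)),
        mul_nonneg (sub_nonneg.2 hx12) (le_of_lt (mul_pos (mul_pos hp1' hp00) hx2)),
        mul_nonneg (sub_nonneg.2 hx12) (le_of_lt (mul_pos hp1' hp0'))]
    -- powers
    have hGkratio : G y2 ^ (N-1) * (y1 ^ α) ^ (N-1) ≤ G y1 ^ (N-1) * (y2 ^ α) ^ (N-1) := by
      calc G y2 ^ (N-1) * (y1 ^ α) ^ (N-1) = (G y2 * y1 ^ α) ^ (N-1) := (mul_pow _ _ _).symm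
        _ ≤ (G y1 * y2 ^ α) ^ (N-1) :=
            pow_le_pow_left₀ (mul_nonneg (hG y2 hy2).le hx1.le) hGratio _
        _ = G y1 ^ (N-1) * (y2 ^ α) ^ (N-1) := mul_pow _ _ _
    have hrw : ∀ z : ℝ, 0 < z → (z ^ α) ^ (N-1) = z ^ (α * ((N-1:ℕ):ℝ)) := by
      intro z hz
      rw [← Real.rpow_natCast (z ^ α) (N-1), ← Real.rpow_mul hz.le]
    have hβ0 : 0 ≤ α * ((N-1:ℕ):ℝ) := mul_nonneg hα0 (Nat.cast_nonneg _)
    have hxk : (y2 ^ α) ^ (N-1) * y1 ≤ (y1 ^ α) ^ (N-1) * y2 := by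
      rw [hrw y1 hy1, hrw y2 hy2]
      have hdiv1 : (1:ℝ) ≤ y2 / y1 := by rw [le_div_iff₀ hy1]; linarith
      have h2 : (y2/y1) ^ (α * ((N-1:ℕ):ℝ)) ≤ (y2/y1) ^ (1:ℝ) :=
        Real.rpow_le_rpow_of_exponent_le hdiv1 hαk
      rw [Real.rpow_one, Real.div_rpow hy2.le hy1.le] at h2
      rw [div_le_div_iff₀ (Real.rpow_pos_of_pos hy1 _) hy1] at h2
      linarith [h2]
    have hxk1 : 0 < (y1 ^ α) ^ (N-1) := pow_pos hx1 _
    have hxk2 : 0 < (y2 ^ α) ^ (N-1) := pow_pos hx2 _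
    -- combine to get t2 * y1 ≤ t1 * y2
    have hty : G y2 ^ (N-1) * y1 ≤ G y1 ^ (N-1) * y2 := by
      have hmm := mul_le_mul hGkratio hxk
        (mul_nonneg hxk2.le hy1.le) (mul_nonneg (hGk y1 hy1).le hxk2.le)
      have h3 : G y2 ^ (N-1) * y1 * ((y1 ^ α) ^ (N-1) * (y2 ^ α) ^ (N-1)) ≤
          G y1 ^ (N-1) * y2 * ((y1 ^ α) ^ (N-1) * (y2 ^ α) ^ (N-1)) := by nlinarith [hmm]
      exact le_of_mul_le_mul_right h3 (mul_pos hxk1 hxk2)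
    have ht12 : G y1 ^ (N-1) ≤ G y2 ^ (N-1) := pow_le_pow_left₀ (hG y1 hy1).le hGmono _
    have ht1 := hGk y1 hy1
    have ht2 := hGk y2 hy2
    have htt : G y1 ^ (N-1) * y1 ≤ G y2 ^ (N-1) * y2 := by nlinarith
    have e2 : f y2 * y1 = ((1 - q) / q * (p1 * pcn * G y2 ^ (N - 1) + p0 * (1 - pcn)) * y1) /
        ((1 - p1) * pcn * G y2 ^ (N - 1) + (1 - p0) * (1 - pcn)) := by rw [hfdef]; ring
    have e1 : f y1 * y2 = ((1 - q) / q * (p1 * pcn * G y1 ^ (N - 1) + p0 * (1 - pcn)) * y2) /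
        ((1 - p1) * pcn * G y1 ^ (N - 1) + (1 - p0) * (1 - pcn)) := by rw [hfdef]; ring
    rw [e1, e2, div_lt_div_iff₀ (hfden y2 hy2) (hfden y1 hy1)]
    exact mob_key hA hB hA' hB' hc ht1 ht2 hy12 hty htt
  -- conclude
  refine ⟨y, ⟨hy0, hyfix⟩, ?_⟩
  rintro z ⟨hz0, hzfix⟩
  by_contra hne
  rcases lt_or_gt_of_ne hne with h | h
  · have hk := key z y hz0 h
    rw [hzfix, hyfix] at hk
    nlinarith [hk]
  · have hk := key y z hy0 h
    rw [hzfix, hyfix] at hk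
    nlinarith [hk]
end

section
/- Let 0 < p0 < p1 < 1 and N ≥ 2 be an integer, θ ∈ (0,1]. Define g2(x) = ((p1·x^{θ/(N-θ)} + (1-p1)) / (p0·x^{θ/(N-θ)} + (1-p0)))^{N-1} for x > 0. Then g2 is strictly increasing and strictly concave on (0,∞). -/
open Real Set

/-!
Write `f(x) = R(x ^ α) ^ m` with `R(u) = (p₁ u + 1 - p₁) / (p₀ u + 1 - p₀)` and `u = x ^ α`.
Since `R(u) ^ (m - 1) x ^ (α - 1) = (R(u) / u) ^ (m - 1) x ^ (α m - 1)`, the derivative factors as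
`f'(x) = m α (R(u) / u) ^ (m - 1) · R'(u) · x ^ (α m - 1)`, a product of positive factors.
As `x` grows, `R(u) / u` does not increase, `R'(u) = (p₁ - p₀) / (p₀ u + 1 - p₀) ^ 2` strictly
decreases, and `x ^ (α m - 1)` does not increase because `α m ≤ 1`. Hence `f' > 0` is strictly
decreasing. For `g2`, `α = θ / (N - θ)` and `m = N - 1`, so `α m ≤ 1` is exactly `θ ≤ 1`.
-/

-- The ratio of the probability generating functions of Bernoulli(`p1`) and Bernoulli(`p0`).
noncomputable def pgfRatio (p0 p1 u : ℝ) : ℝ := (p1 * u + (1 - p1)) / (p0 * u + (1 - p0))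

noncomputable def pgfRatioDeriv (p0 p1 u : ℝ) : ℝ := (p1 - p0) / (p0 * u + (1 - p0)) ^ 2

lemma bernoulli_pgf_pos {p u : ℝ} (hp0 : 0 ≤ p) (hp1 : p ≤ 1) (hu : 0 < u) :
    0 < p * u + (1 - p) := by
  nlinarith [mul_nonneg hp0 hu.le, mul_nonneg (sub_nonneg.2 hp1) hu.le]

section pgfRatio

variable {p0 p1 u : ℝ}

lemma pgfRatio_pos (hp0 : 0 ≤ p0) (hp01 : p0 ≤ 1) (hp1 : 0 ≤ p1) (hp11 : p1 ≤ 1) (hu : 0 < u) :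
    0 < pgfRatio p0 p1 u :=
  div_pos (bernoulli_pgf_pos hp1 hp11 hu) (bernoulli_pgf_pos hp0 hp01 hu)

lemma hasDerivAt_pgfRatio (hu : p0 * u + (1 - p0) ≠ 0) :
    HasDerivAt (pgfRatio p0 p1) (pgfRatioDeriv p0 p1 u) u := by
  refine ((((hasDerivAt_id' u).const_mul p1).add_const (1 - p1)).div
    (((hasDerivAt_id' u).const_mul p0).add_const (1 - p0)) hu).congr_deriv ?_
  rw [pgfRatioDeriv]
  ring

lemma pgfRatioDeriv_pos (hpp : p0 < p1) (hu : p0 * u + (1 - p0) ≠ 0) :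
    0 < pgfRatioDeriv p0 p1 u :=
  div_pos (sub_pos.2 hpp) (by positivity)

lemma strictAntiOn_pgfRatioDeriv (hp0 : 0 < p0) (hp01 : p0 ≤ 1) (hpp : p0 < p1) :
    StrictAntiOn (pgfRatioDeriv p0 p1) (Ioi 0) := by
  intro u hu v _ huv
  have := bernoulli_pgf_pos hp0.le hp01 hu
  unfold pgfRatioDeriv
  gcongr

lemma antitoneOn_pgfRatio_div_self (hp0 : 0 ≤ p0) (hp01 : p0 ≤ 1) (hp1 : 0 ≤ p1)
    (hp11 : p1 ≤ 1) : AntitoneOn (fun u => pgfRatio p0 p1 u / u) (Ioi 0) := by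
  intro u (hu : 0 < u) v (hv : 0 < v) huv
  have hdu := bernoulli_pgf_pos hp0 hp01 hu
  have hdv := bernoulli_pgf_pos hp0 hp01 hv
  simp only [pgfRatio, div_div]
  rw [div_le_div_iff₀ (by positivity) (by positivity)]
  have hvu : 0 ≤ v - u := sub_nonneg.2 huv
  linarith [mul_nonneg (mul_nonneg (mul_nonneg hp1 hp0) (mul_pos hu hv).le) hvu,
    mul_nonneg (mul_nonneg (sub_nonneg.2 hp11) hp0) (mul_nonneg hvu (add_pos hu hv).le),
    mul_nonneg (mul_nonneg (sub_nonneg.2 hp11) (sub_nonneg.2 hp01)) hvu]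

end pgfRatio

noncomputable def pgfRatioRpowPowDeriv (p0 p1 α : ℝ) (m : ℕ) (x : ℝ) : ℝ :=
  m * α * (pgfRatio p0 p1 (x ^ α) / x ^ α) ^ (m - 1) * pgfRatioDeriv p0 p1 (x ^ α) *
    x ^ (α * m - 1)

section rpowPow

variable {p0 p1 α : ℝ} {m : ℕ}

lemma hasDerivAt_pgfRatio_rpow_pow (hp0 : 0 ≤ p0) (hp01 : p0 ≤ 1) (hm : 1 ≤ m) {x : ℝ}
    (hx : 0 < x) :
    HasDerivAt (fun y => pgfRatio p0 p1 (y ^ α) ^ m) (pgfRatioRpowPowDeriv p0 p1 α m x) x := by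
  have hu : 0 < x ^ α := rpow_pos_of_pos hx α
  have hden := (bernoulli_pgf_pos hp0 hp01 hu).ne'
  refine (((hasDerivAt_pgfRatio hden).comp x
    (hasDerivAt_rpow_const (Or.inl hx.ne'))).pow m).congr_deriv ?_
  obtain ⟨k, rfl⟩ := Nat.exists_eq_add_of_le' hm
  have hsplit : x ^ (α * ↑(k + 1) - 1) = (x ^ α) ^ k * x ^ (α - 1) := by
    rw [← rpow_mul_natCast hx.le, ← rpow_add hx]
    push_cast
    ring_nf
  rw [pgfRatioRpowPowDeriv, hsplit, Nat.add_sub_cancel, div_pow, Function.comp_apply]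
  field_simp

lemma deriv_pgfRatio_rpow_pow (hp0 : 0 ≤ p0) (hp01 : p0 ≤ 1) (hm : 1 ≤ m) :
    EqOn (deriv fun y => pgfRatio p0 p1 (y ^ α) ^ m) (pgfRatioRpowPowDeriv p0 p1 α m) (Ioi 0) :=
  fun _ hx => (hasDerivAt_pgfRatio_rpow_pow hp0 hp01 hm hx).deriv

lemma continuousOn_pgfRatio_rpow_pow (hp0 : 0 ≤ p0) (hp01 : p0 ≤ 1) (hm : 1 ≤ m) :
    ContinuousOn (fun y => pgfRatio p0 p1 (y ^ α) ^ m) (Ioi 0) :=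
  fun _ hx => (hasDerivAt_pgfRatio_rpow_pow hp0 hp01 hm hx).continuousAt.continuousWithinAt

lemma pgfRatioRpowPowDeriv_pos (hp0 : 0 ≤ p0) (hpp : p0 < p1) (hp11 : p1 ≤ 1) (hα : 0 < α)
    (hm : 1 ≤ m) {x : ℝ} (hx : 0 < x) :
    0 < pgfRatioRpowPowDeriv p0 p1 α m x := by
  have hu : 0 < x ^ α := rpow_pos_of_pos hx α
  have hR := pgfRatio_pos hp0 (by linarith) (by linarith) hp11 hu
  have hR' := pgfRatioDeriv_pos (u := x ^ α) hpp (bernoulli_pgf_pos hp0 (by linarith) hu).ne'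
  have hm' : (0 : ℝ) < m := by exact_mod_cast hm
  unfold pgfRatioRpowPowDeriv
  positivity

lemma strictAntiOn_pgfRatioRpowPowDeriv (hp0 : 0 < p0) (hpp : p0 < p1) (hp11 : p1 ≤ 1)
    (hα : 0 < α) (hαm : α * m ≤ 1) (hm : 1 ≤ m) :
    StrictAntiOn (pgfRatioRpowPowDeriv p0 p1 α m) (Ioi 0) := by
  intro x (hx : 0 < x) y (hy : 0 < y) hxy
  have hu : 0 < x ^ α := rpow_pos_of_pos hx α
  have hv : 0 < y ^ α := rpow_pos_of_pos hy α
  have huv : x ^ α < y ^ α := rpow_lt_rpow hx.le hxy hα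
  have hR_div : pgfRatio p0 p1 (y ^ α) / y ^ α ≤ pgfRatio p0 p1 (x ^ α) / x ^ α :=
    antitoneOn_pgfRatio_div_self hp0.le (by linarith) (by linarith) hp11 hu hv huv.le
  have hR' : pgfRatioDeriv p0 p1 (y ^ α) < pgfRatioDeriv p0 p1 (x ^ α) :=
    strictAntiOn_pgfRatioDeriv hp0 (by linarith) hpp hu hv huv
  have hpow : y ^ (α * m - 1) ≤ x ^ (α * m - 1) :=
    rpow_le_rpow_of_nonpos hx hxy.le (by linarith)
  have hRu := pgfRatio_pos hp0.le (by linarith) (by linarith) hp11 hu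
  have hRv := pgfRatio_pos hp0.le (by linarith) (by linarith) hp11 hv
  have hR'v := pgfRatioDeriv_pos (u := y ^ α) hpp (bernoulli_pgf_pos hp0.le (by linarith) hv).ne'
  have hm' : (0 : ℝ) < m := by exact_mod_cast hm
  unfold pgfRatioRpowPowDeriv
  calc _ ≤ m * α * (pgfRatio p0 p1 (x ^ α) / x ^ α) ^ (m - 1) * pgfRatioDeriv p0 p1 (y ^ α) *
        x ^ (α * m - 1) := by gcongr
    _ < _ := by gcongr

theorem strictMonoOn_pgfRatio_rpow_pow (hp0 : 0 ≤ p0) (hpp : p0 < p1) (hp11 : p1 ≤ 1)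
    (hα : 0 < α) (hm : 1 ≤ m) :
    StrictMonoOn (fun x => pgfRatio p0 p1 (x ^ α) ^ m) (Ioi 0) := by
  refine strictMonoOn_of_deriv_pos (convex_Ioi 0)
    (continuousOn_pgfRatio_rpow_pow hp0 (by linarith) hm) fun x hx => ?_
  rw [interior_Ioi] at hx
  rw [deriv_pgfRatio_rpow_pow hp0 (by linarith) hm hx]
  exact pgfRatioRpowPowDeriv_pos hp0 hpp hp11 hα hm hx

theorem strictConcaveOn_pgfRatio_rpow_pow (hp0 : 0 < p0) (hpp : p0 < p1) (hp11 : p1 ≤ 1)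
    (hα : 0 < α) (hαm : α * m ≤ 1) (hm : 1 ≤ m) :
    StrictConcaveOn ℝ (Ioi 0) (fun x => pgfRatio p0 p1 (x ^ α) ^ m) := by
  refine StrictAntiOn.strictConcaveOn_of_deriv (convex_Ioi 0)
    (continuousOn_pgfRatio_rpow_pow hp0.le (by linarith) hm) ?_
  rw [interior_Ioi]
  exact (strictAntiOn_pgfRatioRpowPowDeriv hp0 hpp hp11 hα hαm hm).congr
    (deriv_pgfRatio_rpow_pow hp0.le (by linarith) hm).symm

end rpowPow

theorem stmt8 (p0 p1 θ : ℝ) (N : ℕ)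
    (hp00 : 0 < p0) (hpp : p0 < p1) (hp11 : p1 < 1)
    (hθ0 : 0 < θ) (hθ1 : θ ≤ 1) (hN : 2 ≤ N) :
    let g2 : ℝ → ℝ := fun x =>
      ((p1 * x ^ (θ / ((N : ℝ) - θ)) + (1 - p1)) /
        (p0 * x ^ (θ / ((N : ℝ) - θ)) + (1 - p0))) ^ (N - 1)
    StrictMonoOn g2 (Set.Ioi (0 : ℝ)) ∧ StrictConcaveOn ℝ (Set.Ioi (0 : ℝ)) g2 := by
  intro g2
  have hN_real : (2 : ℝ) ≤ N := by exact_mod_cast hN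
  have hα : 0 < θ / ((N : ℝ) - θ) := div_pos hθ0 (by linarith)
  have hm : 1 ≤ N - 1 := by omega
  have hαm : θ / ((N : ℝ) - θ) * ((N - 1 : ℕ) : ℝ) ≤ 1 := by
    rw [Nat.cast_sub (by omega), Nat.cast_one, div_mul_eq_mul_div, div_le_one (by linarith)]
    nlinarith
  exact ⟨strictMonoOn_pgfRatio_rpow_pow hp00.le hpp hp11.le hα hm,
    strictConcaveOn_pgfRatio_rpow_pow hp00 hpp hp11.le hα hαm hm⟩
end

section
/- Let γ1, γ2 > 0, θ1, θ2 ∈ (0,1), q1, q2 ∈ (0,1), and let p^{1,1}, p^{0,1}, p^{1,0}, p^{0,0} > 0 satisfy p^{1,1}·p^{0,0} - p^{0,1}·p^{1,0} > 0 and p^{1,1}+p^{0,1}+p^{1,0}+p^{0,0} = 1. Then there exists y* with 0 < y* < ((p^{1,1}(1-q1))/(p^{0,1}·q1))^{(θ2·γ2)/((2-θ1)·γ1)} such that y*^{((2-θ1)γ1)/(θ2γ2)} = ((1-q1)·(p^{1,1}·L(y*)^α + p^{1,0})) / (q1·(p^{0,1}·L(y*)^α + p^{0,0})), where L(y) = ((1-q2)(p^{1,1}y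 + p^{0,1}))/(q2(p^{1,0}y + p^{0,0})) and α = (γ1·θ1)/(γ2·(2-θ2)). -/
set_option maxHeartbeats 1000000


theorem stmt10 (γ1 γ2 θ1 θ2 q1 q2 p11 p01 p10 p00 : ℝ)
    (hγ1 : 0 < γ1) (hγ2 : 0 < γ2)
    (hθ10 : 0 < θ1) (hθ11 : θ1 < 1) (hθ20 : 0 < θ2) (hθ21 : θ2 < 1)
    (hq10 : 0 < q1) (hq11 : q1 < 1) (hq20 : 0 < q2) (hq21 : q2 < 1)
    (hp11 : 0 < p11) (hp01 : 0 < p01) (hp10 : 0 < p10) (hp00 : 0 < p00)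
    (hdet : 0 < p11 * p00 - p01 * p10)
    (hsum : p11 + p01 + p10 + p00 = 1) :
    let L : ℝ → ℝ := fun y => (1 - q2) * (p11 * y + p01) / (q2 * (p10 * y + p00))
    let α : ℝ := γ1 * θ1 / (γ2 * (2 - θ2))
    ∃ y : ℝ, 0 < y ∧
      y < ((p11 * (1 - q1)) / (p01 * q1)) ^ ((θ2 * γ2) / ((2 - θ1) * γ1)) ∧
      y ^ (((2 - θ1) * γ1) / (θ2 * γ2)) =
        (1 - q1) * (p11 * L y ^ α + p10) / (q1 * (p01 * L y ^ α + p00)) := by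
  intro L α
  have hq1' : 0 < 1 - q1 := by linarith
  have hq2' : 0 < 1 - q2 := by linarith
  set a := (2 - θ1) * γ1 with ha_def
  set b := θ2 * γ2 with hb_def
  have ha : 0 < a := by rw [ha_def]; nlinarith
  have hb : 0 < b := by rw [hb_def]; positivity
  set β := a / b with hβ_def
  have hβ : 0 < β := div_pos ha hb
  have hα : 0 ≤ α := by
    have h2 : 0 < γ2 * (2 - θ2) := by nlinarith
    exact le_of_lt (div_pos (by positivity) h2)
  set C := p11 * (1 - q1) / (p01 * q1) with hC_def
  have hC : 0 < C := by rw [hC_def]; positivity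
  set B := C ^ (b / a) with hB_def
  have hBpos : 0 < B := Real.rpow_pos_of_pos hC _
  have hBβ : B ^ β = C := by
    rw [hB_def, hβ_def, ← Real.rpow_mul hC.le]
    rw [show b / a * (a / b) = 1 by field_simp, Real.rpow_one]
  -- L is nonneg and positive for y ≥ 0
  have hLpos : ∀ y : ℝ, 0 ≤ y → 0 < L y := by
    intro y hy
    apply div_pos
    · nlinarith [mul_nonneg hp11.le hy]
    · nlinarith [mul_nonneg hp10.le hy]
  have hLαnn : ∀ y : ℝ, 0 ≤ y → 0 ≤ L y ^ α := fun y hy =>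
    Real.rpow_nonneg (hLpos y hy).le α
  -- RHS bounds
  have hden : ∀ t : ℝ, 0 ≤ t → 0 < q1 * (p01 * t + p00) := by
    intro t ht; nlinarith [mul_nonneg hp01.le ht]
  have key : ∀ t : ℝ, 0 ≤ t →
      (1 - q1) * (p11 * t + p10) / (q1 * (p01 * t + p00)) < C := by
    intro t ht
    rw [hC_def, div_lt_div_iff₀ (hden t ht) (by positivity)]
    nlinarith [mul_pos (mul_pos hq1' hq10) hdet, mul_pos hq1' hq10]
  have keypos : ∀ t : ℝ, 0 ≤ t →
      0 < (1 - q1) * (p11 * t + p10) / (q1 * (p01 * t + p00)) := by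
    intro t ht
    have h1 : 0 < (1 - q1) * (p11 * t + p10) := by nlinarith [mul_nonneg hp11.le ht]
    exact div_pos h1 (hden t ht)
  -- the function G
  set G : ℝ → ℝ := fun y => y ^ β -
      (1 - q1) * (p11 * L y ^ α + p10) / (q1 * (p01 * L y ^ α + p00)) with hG_def
  have hcont : ContinuousOn G (Set.Icc 0 B) := by
    have h1 : Continuous fun y : ℝ => y ^ β :=
      continuous_iff_continuousAt.mpr fun x =>
        Real.continuousAt_rpow_const x β (Or.inr hβ.le)
    have hLc : ContinuousOn L (Set.Icc 0 B) := by
      apply ContinuousOn.div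
      · fun_prop
      · fun_prop
      · intro y hy
        have : 0 < q2 * (p10 * y + p00) := by nlinarith [mul_nonneg hp10.le hy.1]
        exact this.ne'
    have hLα : ContinuousOn (fun y => L y ^ α) (Set.Icc 0 B) :=
      hLc.rpow_const fun y hy => Or.inl (hLpos y hy.1).ne'
    apply (h1.continuousOn).sub
    apply ContinuousOn.div
    · exact (continuousOn_const.mul ((continuousOn_const.mul hLα).add continuousOn_const))
    · exact (continuousOn_const.mul ((continuousOn_const.mul hLα).add continuousOn_const))
    · intro y hy
      exact (hden _ (hLαnn y hy.1)).ne'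
  have hG0 : G 0 < 0 := by
    have : (0:ℝ) ^ β = 0 := Real.zero_rpow hβ.ne'
    simp only [hG_def, this]
    have := keypos _ (hLαnn 0 le_rfl)
    linarith
  have hGB : 0 < G B := by
    have := key _ (hLαnn B hBpos.le)
    simp only [hG_def, hBβ]
    linarith
  have hsub := intermediate_value_Ioo hBpos.le hcont
  have h0mem : (0:ℝ) ∈ Set.Ioo (G 0) (G B) := ⟨hG0, hGB⟩
  obtain ⟨y, hy, hGy⟩ := hsub h0mem
  refine ⟨y, hy.1, hy.2, ?_⟩
  have : G y = 0 := hGy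
  rw [hG_def] at this
  simp only at this
  linarith
end

section
/- Let p^{cn}, p0, p1 ∈ (0,1) with p0 < p1, q ∈ (0,1), γ > 0, θ ∈ (0,1], u > 1 > d > 0 with q = (1-d)/(u-d), and y > 0. Define π(y) = (1/(γ(u-d)))·log( (1-q)(p^{cn}·exp(γθy)·p1 + (1-p^{cn})·p0) / (q·(p^{cn}·exp(γθy)·(1-p1) + (1-p^{cn})·(1-p0))) ) and π_Merton = (1/(γ(u-d)))·log((1-q)p/(q(1-p))) with p = p^{cn}p1 + (1-p^{cn})p0. Then π(y) > π_Merton, i.e. the competition component π(y) − π_Merton is strictly positive. -/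
theorem stmt17 (pcn p0 p1 q γ θ u d y : ℝ)
    (hcn0 : 0 < pcn) (hcn1 : pcn < 1)
    (hp00 : 0 < p0) (hp01 : p0 < 1) (hp10 : 0 < p1) (hp11 : p1 < 1)
    (hpp : p0 < p1) (hq0 : 0 < q) (hq1 : q < 1)
    (hγ : 0 < γ) (hθ0 : 0 < θ) (hθ1 : θ ≤ 1)
    (hu : 1 < u) (hd1 : d < 1) (hd0 : 0 < d)
    (hqdef : q = (1 - d) / (u - d)) (hy : 0 < y) :
    let p : ℝ := pcn * p1 + (1 - pcn) * p0
    let πy : ℝ := (1 / (γ * (u - d))) *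
      Real.log ((1 - q) * (pcn * Real.exp (γ * θ * y) * p1 + (1 - pcn) * p0) /
        (q * (pcn * Real.exp (γ * θ * y) * (1 - p1) + (1 - pcn) * (1 - p0))))
    let πM : ℝ := (1 / (γ * (u - d))) * Real.log ((1 - q) * p / (q * (1 - p)))
    πM < πy := by
  intro p πy πM
  set E : ℝ := Real.exp (γ * θ * y) with hEdef
  have hE : 1 < E := by
    rw [hEdef, show (1:ℝ) = Real.exp 0 by simp]
    exact Real.exp_lt_exp.mpr (by positivity)
  have hud : 0 < u - d := by linarith
  have hp0 : 0 < p := by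
    have : 0 < 1 - pcn := by linarith
    positivity
  have hp1 : p < 1 := by
    have h1 : pcn * p1 < pcn * 1 := by nlinarith
    have h2 : (1 - pcn) * p0 < (1 - pcn) * 1 := by nlinarith
    simp only [p]; nlinarith
  have hpcn' : 0 < 1 - pcn := by linarith
  have hN : 0 < pcn * E * p1 + (1 - pcn) * p0 := by positivity
  have hD : 0 < pcn * E * (1 - p1) + (1 - pcn) * (1 - p0) := by
    have h1 : 0 < 1 - p1 := by linarith
    have h0 : 0 < 1 - p0 := by linarith
    have hEpos : 0 < E := lt_trans one_pos hE
    positivity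
  have hq' : 0 < 1 - q := by linarith
  have h1p : 0 < 1 - p := by linarith
  -- key algebraic inequality: p * D < N * (1 - p)
  have key : p * (pcn * E * (1 - p1) + (1 - pcn) * (1 - p0)) <
      (pcn * E * p1 + (1 - pcn) * p0) * (1 - p) := by
    have expand : (pcn * E * p1 + (1 - pcn) * p0) * (1 - p) -
        p * (pcn * E * (1 - p1) + (1 - pcn) * (1 - p0)) =
        pcn * (1 - pcn) * (E - 1) * (p1 - p0) := by
      simp only [p]; ring
    nlinarith [mul_pos (mul_pos (mul_pos hcn0 hpcn') (by linarith : (0:ℝ) < E - 1))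
      (by linarith : (0:ℝ) < p1 - p0)]
  -- ratio inequality
  have hratio : (1 - q) * p / (q * (1 - p)) <
      (1 - q) * (pcn * E * p1 + (1 - pcn) * p0) /
        (q * (pcn * E * (1 - p1) + (1 - pcn) * (1 - p0))) := by
    rw [div_lt_div_iff₀ (by positivity) (by positivity)]
    nlinarith [mul_pos hq0 hq', key]
  have hlog : Real.log ((1 - q) * p / (q * (1 - p))) <
      Real.log ((1 - q) * (pcn * E * p1 + (1 - pcn) * p0) /
        (q * (pcn * E * (1 - p1) + (1 - pcn) * (1 - p0)))) :=
    Real.log_lt_log (by positivity) hratio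
  have hc : 0 < 1 / (γ * (u - d)) := by positivity
  simp only [πy, πM]
  exact mul_lt_mul_of_pos_left hlog hc
end
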